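/- arXiv:math/0702478 — 2 statements merged into one kernel-verified Lean document; each statement's English description precedes it below -/
import Mathlib

section
/- Let K be a field. The Sibirsky ideal I_S equals the kernel of ψ₀, i.e., I_S = ker ψ₀ as ideals of the polynomial ring K[a₁,…,a_ℓ,b_ℓ,…,b₁]. -/
open MvPolynomial

noncomputable section

/-- Index in `Fin (2*ℓ)` of the coefficient `a_k` (0-indexed position `k`). -/
def aIdx (l : ℕ) (k : Fin l) : Fin (2 * l) :=
  ⟨(k : ℕ), by have := k.isLt; omega⟩

/-- Index in `Fin (2*ℓ)` of the coefficient `b_k` (0-indexed position `2ℓ-1-k`),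
    matching the ordering `(a₁,…,a_ℓ, b_ℓ,…,b₁)`. -/
def bIdx (l : ℕ) (k : Fin l) : Fin (2 * l) :=
  ⟨2 * l - 1 - (k : ℕ), by have := k.isLt; omega⟩

/-- The vector `ζ = (p₁−q₁, …, p_ℓ−q_ℓ, q_ℓ−p_ℓ, …, q₁−p₁)`. -/
def zeta {l : ℕ} (p : Fin l → ℤ) (q : Fin l → ℕ) : Fin (2 * l) → ℤ := fun i =>
  if h : (i : ℕ) < l then p ⟨(i : ℕ), h⟩ - (q ⟨(i : ℕ), h⟩ : ℤ)
  else (q ⟨2 * l - 1 - (i : ℕ), by have := i.isLt; omega⟩ : ℤ) -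
    p ⟨2 * l - 1 - (i : ℕ), by have := i.isLt; omega⟩

/-- Dot product of an integer vector with a vector of natural numbers. -/
def zdot {n : ℕ} (z : Fin n → ℤ) (v : Fin n → ℕ) : ℤ := ∑ i, z i * (v i : ℤ)

/-- Reversal (involution) of a vector: `ν̂ = (ν_{2ℓ}, …, ν₁)`. -/
def revVec {n : ℕ} {α : Type*} (v : Fin n → α) : Fin n → α := fun i => v i.rev

/-- The monomial `[ν] = a₁^{ν₁}⋯a_ℓ^{ν_ℓ}·b_ℓ^{ν_{ℓ+1}}⋯b₁^{ν_{2ℓ}}` in the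
    polynomial ring in `2ℓ` variables. -/
def monX {K : Type*} [CommSemiring K] {n : ℕ} (v : Fin n → ℕ) :
    MvPolynomial (Fin n) K :=
  ∏ i, (X i) ^ (v i)

/-- Time-reversibility of the coefficient vector `x = (a,b)`: there is `γ ≠ 0`
    with `b_k = γ^{p_k−q_k}·a_k` for all `k`. -/
def TimeRev {K : Type*} [Field K] {l : ℕ} (p : Fin l → ℤ) (q : Fin l → ℕ)
    (x : Fin (2 * l) → K) : Prop :=
  ∃ γ : K, γ ≠ 0 ∧ ∀ k : Fin l, x (bIdx l k) = γ ^ (p k - (q k : ℤ)) * x (aIdx l k)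

/-- The Sibirsky ideal `I_S = ⟨[ν] − [ν̂] : ν ∈ M⟩`. -/
def sibirsky (K : Type*) [CommRing K] {l : ℕ} (p : Fin l → ℤ) (q : Fin l → ℕ) :
    Ideal (MvPolynomial (Fin (2 * l)) K) :=
  Ideal.span {f | ∃ v : Fin (2 * l) → ℕ,
    zdot (zeta p q) v = 0 ∧ f = monX v - monX (revVec v)}

/-- The homomorphism `ψ₀ : K[a₁,…,a_ℓ,b_ℓ,…,b₁] → K(γ,t₁,…,t_ℓ)`,
    `a_k ↦ t_k`, `b_k ↦ γ^{p_k−q_k}·t_k`; here `γ` is the image of `X 0` and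
    `t_k` the image of `X k.succ` in the fraction field of `K[X₀,…,X_ℓ]`. -/
def psi0 {K : Type*} [Field K] {l : ℕ} (p : Fin l → ℤ) (q : Fin l → ℕ) :
    MvPolynomial (Fin (2 * l)) K →ₐ[K] FractionRing (MvPolynomial (Fin (l + 1)) K) :=
  aeval fun i =>
    if h : (i : ℕ) < l then
      algebraMap (MvPolynomial (Fin (l + 1)) K)
        (FractionRing (MvPolynomial (Fin (l + 1)) K)) (X (Fin.succ ⟨(i : ℕ), h⟩))
    else
      (algebraMap (MvPolynomial (Fin (l + 1)) K)
          (FractionRing (MvPolynomial (Fin (l + 1)) K)) (X 0)) ^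
        (p ⟨2 * l - 1 - (i : ℕ), by have := i.isLt; omega⟩ -
          (q ⟨2 * l - 1 - (i : ℕ), by have := i.isLt; omega⟩ : ℤ)) *
      algebraMap (MvPolynomial (Fin (l + 1)) K)
        (FractionRing (MvPolynomial (Fin (l + 1)) K))
        (X (Fin.succ ⟨2 * l - 1 - (i : ℕ), by have := i.isLt; omega⟩))

/-- The linear map `U_η`, multiplying the coordinate `a_k` by `η^{q_k−p_k}` and the
    coordinate `b_k` by `η^{p_k−q_k}`. -/
def Ueta {K : Type*} [Field K] {l : ℕ} (p : Fin l → ℤ) (q : Fin l → ℕ) (η : K)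
    (x : Fin (2 * l) → K) : Fin (2 * l) → K := fun i =>
  if h : (i : ℕ) < l then η ^ ((q ⟨(i : ℕ), h⟩ : ℤ) - p ⟨(i : ℕ), h⟩) * x i
  else η ^ (p ⟨2 * l - 1 - (i : ℕ), by have := i.isLt; omega⟩ -
    (q ⟨2 * l - 1 - (i : ℕ), by have := i.isLt; omega⟩ : ℤ)) * x i

/-- The orbit of `x` under the group `{U_η : η ≠ 0}`. -/
def orbitU {K : Type*} [Field K] {l : ℕ} (p : Fin l → ℤ) (q : Fin l → ℕ)
    (x : Fin (2 * l) → K) : Set (Fin (2 * l) → K) :=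
  {y | ∃ η : K, η ≠ 0 ∧ y = Ueta p q η x}

/-!
Under `ψ₀` the monomial `[ν]` goes to the Laurent monomial
`γ ^ (∑ₖ (pₖ - qₖ) ν_{bₖ}) * ∏ₖ tₖ ^ (ν_{aₖ} + ν_{bₖ})`, and distinct Laurent monomials are linearly
independent (a power of `γ` clears all denominators). Hence `ker ψ₀` is spanned by the binomials
`[μ] - [ν]` whose images have equal exponents. Such a binomial factors as
`[μ ⊓ ν] * ([μ - ν] - [ν - μ])`: equal `t`-exponents make `ν - μ` the reversal of `μ - ν`, and equal
`γ`-exponents then put `μ - ν` in `M`.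
-/

theorem zpow_sum₀ {G₀ ι : Type*} [CommGroupWithZero G₀] {a : G₀} (ha : a ≠ 0) (s : Finset ι)
    (f : ι → ℤ) : a ^ (∑ i ∈ s, f i) = ∏ i ∈ s, a ^ f i := by
  classical
  induction s using Finset.induction with
  | empty => simp
  | insert i s hi ih => rw [Finset.sum_insert hi, Finset.prod_insert hi, zpow_add₀ ha, ih]

theorem Finset.sum_comp_eq_sum_fiberwise {α β M : Type*} [DecidableEq β] [AddCommMonoid M]
    (s : Finset α) (g : α → β) (F : α → β → M) :
    ∑ a ∈ s, F a (g a) = ∑ b ∈ s.image g, ∑ a ∈ s with g a = b, F a b := by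
  rw [← sum_fiberwise_of_maps_to fun a ha => mem_image_of_mem g ha]
  exact sum_congr rfl fun b _ => sum_congr rfl fun a ha => by rw [(mem_filter.1 ha).2]

namespace MvPolynomial

theorem ker_eq_span_binomials {R σ A ι : Type*} [CommRing R] [CommRing A]
    [Algebra R A] (φ : MvPolynomial σ R →ₐ[R] A) {e : ι → A} (he : LinearIndependent R e)
    (g : (σ →₀ ℕ) → ι) (hφ : ∀ d, φ (monomial d 1) = e (g d)) :
    RingHom.ker φ = Ideal.span {f | ∃ a b, g a = g b ∧ f = monomial a 1 - monomial b 1} := by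
  classical
  refine le_antisymm (fun f hf => ?_) (Ideal.span_le.2 ?_)
  · set s := f.support
    have hfiber : ∀ j ∈ s.image g, ∑ d ∈ s with g d = j, coeff d f = 0 := by
      refine linearIndependent_iff'.1 he _ _ ?_
      simp_rw [Finset.sum_smul]
      rw [← Finset.sum_comp_eq_sum_fiberwise s g fun d j => coeff d f • e j,
        ← (RingHom.mem_ker).1 hf]
      conv_rhs => rw [f.as_sum, map_sum]
      refine Finset.sum_congr rfl fun d _ => ?_
      rw [← hφ, ← map_smul, smul_monomial, smul_eq_mul, mul_one]
    set ρ := Function.invFun g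
    have hρ : ∑ d ∈ s, C (coeff d f) * monomial (ρ (g d)) 1 = 0 := by
      rw [Finset.sum_comp_eq_sum_fiberwise s g fun d j => C (coeff d f) * monomial (ρ j) 1]
      refine Finset.sum_eq_zero fun j hj => ?_
      rw [← Finset.sum_mul, ← map_sum, hfiber j hj, map_zero, zero_mul]
    have hf_eq : f = ∑ d ∈ s, C (coeff d f) * (monomial d 1 - monomial (ρ (g d)) 1) := by
      simp_rw [mul_sub, Finset.sum_sub_distrib, hρ, sub_zero, C_mul_monomial, mul_one]
      exact f.as_sum
    rw [hf_eq]
    refine Ideal.sum_mem _ fun d _ => Ideal.mul_mem_left _ _ (Ideal.subset_span ?_)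
    exact ⟨d, ρ (g d), (Function.invFun_eq ⟨d, rfl⟩).symm, rfl⟩
  · rintro _ ⟨a, b, hab, rfl⟩
    simp [hφ, hab]

variable {R σ : Type*} [CommRing R] [IsDomain R]

theorem algebraMap_X_ne_zero (i : σ) :
    algebraMap (MvPolynomial σ R) (FractionRing (MvPolynomial σ R)) (X i) ≠ 0 :=
  (map_ne_zero_iff _ (IsFractionRing.injective _ _)).2 (X_ne_zero i)

variable [Fintype σ]

def laurentMonomial (m : σ → ℤ) : FractionRing (MvPolynomial σ R) :=
  ∏ i, algebraMap (MvPolynomial σ R) (FractionRing (MvPolynomial σ R)) (X i) ^ m i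

theorem laurentMonomial_add (m n : σ → ℤ) :
    laurentMonomial (R := R) (m + n) = laurentMonomial m * laurentMonomial n := by
  rw [laurentMonomial, laurentMonomial, laurentMonomial, ← Finset.prod_mul_distrib]
  exact Finset.prod_congr rfl fun i _ => zpow_add₀ (algebraMap_X_ne_zero i) _ _

theorem laurentMonomial_natCast (d : σ →₀ ℕ) :
    laurentMonomial (R := R) (fun i => (d i : ℤ)) =
      algebraMap (MvPolynomial σ R) (FractionRing (MvPolynomial σ R)) (monomial d 1) := by
  simp only [laurentMonomial, zpow_natCast, ← map_pow, ← map_prod]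
  rw [monomial_eq, C_1, one_mul, Finsupp.prod_pow]

theorem linearIndependent_laurentMonomial :
    LinearIndependent R (laurentMonomial (R := R) (σ := σ)) := by
  classical
  rw [linearIndependent_iff']
  intro s c hs m hm
  obtain ⟨N, hN⟩ : ∃ N : σ → ℤ, ∀ n ∈ s, ∀ i, 0 ≤ n i + N i := by
    refine ⟨fun i => ∑ n ∈ s, |n i|, fun n hn i => ?_⟩
    have := Finset.single_le_sum (f := fun n : σ → ℤ => |n i|) (fun _ _ => abs_nonneg _) hn
    linarith [neg_abs_le (n i)]
  set E : (σ → ℤ) → σ →₀ ℕ := fun n => Finsupp.equivFunOnFinite.symm fun i => (n i + N i).toNat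
  have hE : ∀ n ∈ s, laurentMonomial n * laurentMonomial N =
      algebraMap (MvPolynomial σ R) (FractionRing (MvPolynomial σ R)) (monomial (E n) 1) := by
    intro n hn
    rw [← laurentMonomial_add, ← laurentMonomial_natCast]
    congr 1; funext i
    simp [E, Int.toNat_of_nonneg (hN n hn i)]
  have hE_inj : Set.InjOn E s := by
    intro n hn n' hn' h
    funext i
    have := congrArg (fun d => (d i : ℤ)) h
    simp only [E, Finsupp.coe_equivFunOnFinite_symm,
      Int.toNat_of_nonneg (hN n hn i), Int.toNat_of_nonneg (hN n' hn' i)] at this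
    linarith
  have hpoly : ∑ n ∈ s, monomial (E n) (c n) = 0 := by
    apply IsFractionRing.injective (MvPolynomial σ R) (FractionRing (MvPolynomial σ R))
    rw [map_zero, ← zero_mul (laurentMonomial N), ← hs, Finset.sum_mul, map_sum]
    refine Finset.sum_congr rfl fun n hn => ?_
    rw [smul_mul_assoc, hE n hn, ← IsScalarTower.coe_toAlgHom' R, ← map_smul, smul_monomial,
      smul_eq_mul, mul_one]
  have := congrArg (coeff (E m)) hpoly
  rwa [coeff_sum, Finset.sum_eq_single_of_mem m hm, coeff_monomial, if_pos rfl] at this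
  intro n hn hnm
  rw [coeff_monomial, if_neg fun h => hnm (hE_inj hn hm h)]

end MvPolynomial

def abEquiv (l : ℕ) : Fin l ⊕ Fin l ≃ Fin (2 * l) :=
  (Equiv.sumCongr (Equiv.refl _) Fin.revPerm).trans
    (finSumFinEquiv.trans (finCongr (two_mul l).symm))

@[simp] theorem abEquiv_inl {l : ℕ} (k : Fin l) : abEquiv l (.inl k) = aIdx l k := rfl

@[simp] theorem abEquiv_inr {l : ℕ} (k : Fin l) : abEquiv l (.inr k) = bIdx l k := by
  ext; simp [abEquiv, bIdx]; omega

@[to_additive]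
theorem prod_eq_prod_aIdx_mul_prod_bIdx {l : ℕ} {M : Type*} [CommMonoid M]
    (f : Fin (2 * l) → M) :
    ∏ i, f i = (∏ k, f (aIdx l k)) * ∏ k, f (bIdx l k) := by
  rw [← (abEquiv l).prod_comp, Fintype.prod_sum_type]
  simp

theorem rev_aIdx {l : ℕ} (k : Fin l) : (aIdx l k).rev = bIdx l k := by
  ext; simp [aIdx, bIdx]; omega

theorem rev_bIdx {l : ℕ} (k : Fin l) : (bIdx l k).rev = aIdx l k := by
  rw [← rev_aIdx, Fin.rev_rev]

theorem monX_eq_monomial {R : Type*} [CommSemiring R] {n : ℕ} (v : Fin n → ℕ) :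
    (monX v : MvPolynomial (Fin n) R) = monomial (Finsupp.equivFunOnFinite.symm v) 1 := by
  rw [monomial_eq, C_1, one_mul, Finsupp.prod_pow]
  rfl

theorem monX_coe {R : Type*} [CommSemiring R] {n : ℕ} (d : Fin n →₀ ℕ) :
    (monX ⇑d : MvPolynomial (Fin n) R) = monomial d 1 := by
  rw [monX_eq_monomial, Finsupp.equivFunOnFinite_symm_coe]

theorem monX_add {R : Type*} [CommSemiring R] {n : ℕ} (u v : Fin n → ℕ) :
    (monX (u + v) : MvPolynomial (Fin n) R) = monX u * monX v := by
  simp only [monX, Pi.add_apply, pow_add, Finset.prod_mul_distrib]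

section Exponents

variable {l : ℕ} (p : Fin l → ℤ) (q : Fin l → ℕ)

def gammaExp (v : Fin (2 * l) → ℕ) : ℤ := ∑ k, (p k - q k) * v (bIdx l k)

def tExp (v : Fin (2 * l) → ℕ) (k : Fin l) : ℕ := v (aIdx l k) + v (bIdx l k)

def psi0Exp (v : Fin (2 * l) → ℕ) : Fin (l + 1) → ℤ :=
  Fin.cons (gammaExp p q v) fun k => (tExp v k : ℤ)

theorem psi0Exp_eq_iff {u v : Fin (2 * l) → ℕ} :
    psi0Exp p q u = psi0Exp p q v ↔ gammaExp p q u = gammaExp p q v ∧ tExp u = tExp v := by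
  rw [psi0Exp, psi0Exp, Fin.cons_inj]
  simp [funext_iff]

theorem gammaExp_add (u v : Fin (2 * l) → ℕ) :
    gammaExp p q (u + v) = gammaExp p q u + gammaExp p q v := by
  simp only [gammaExp, Pi.add_apply, Nat.cast_add, mul_add, Finset.sum_add_distrib]

theorem zeta_aIdx (k : Fin l) : zeta p q (aIdx l k) = p k - q k :=
  dif_pos k.isLt

theorem zeta_bIdx (k : Fin l) : zeta p q (bIdx l k) = q k - p k := by
  have hk : 2 * l - 1 - (bIdx l k : ℕ) = k := by simp only [bIdx]; omega
  rw [zeta, dif_neg (by simp only [bIdx]; omega)]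
  simp only [hk]

theorem zdot_zeta (v : Fin (2 * l) → ℕ) :
    zdot (zeta p q) v = gammaExp p q (revVec v) - gammaExp p q v := by
  simp only [zdot, sum_eq_sum_aIdx_add_sum_bIdx, zeta_aIdx, zeta_bIdx, gammaExp, revVec, rev_bIdx]
  rw [sub_eq_add_neg, ← Finset.sum_neg_distrib]
  congr 1
  exact Finset.sum_congr rfl fun k _ => by ring

theorem tExp_revVec (v : Fin (2 * l) → ℕ) : tExp (revVec v) = tExp v := by
  funext k
  simp only [tExp, revVec, rev_aIdx, rev_bIdx, add_comm]

theorem revVec_tsub_of_tExp_eq {a b : Fin (2 * l) → ℕ} (h : tExp a = tExp b) :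
    revVec (a - b) = b - a := by
  funext i
  have h := congrFun h
  obtain ⟨k | k, rfl⟩ := (abEquiv l).surjective i
  all_goals
    simp only [abEquiv_inl, abEquiv_inr, revVec, rev_aIdx, rev_bIdx, Pi.sub_apply]
    have := h k
    simp only [tExp] at this
    omega

end Exponents

section Sibirsky

variable (K : Type*) [CommRing K] {l : ℕ} (p : Fin l → ℤ) (q : Fin l → ℕ)

theorem monX_sub_monX_mem_sibirsky {a b : Fin (2 * l) → ℕ} (ht : tExp a = tExp b)
    (hg : gammaExp p q a = gammaExp p q b) : monX a - monX b ∈ sibirsky K p q := by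
  have ha : a ⊓ b + (a - b) = a := by
    funext i; simp only [Pi.add_apply, Pi.inf_apply, Pi.sub_apply]; omega
  have hb : a ⊓ b + (b - a) = b := by
    funext i; simp only [Pi.add_apply, Pi.inf_apply, Pi.sub_apply]; omega
  have hrev := revVec_tsub_of_tExp_eq ht
  have hz : zdot (zeta p q) (a - b) = 0 := by
    rw [zdot_zeta, hrev]
    have hga := gammaExp_add p q (a ⊓ b) (a - b)
    have hgb := gammaExp_add p q (a ⊓ b) (b - a)
    rw [ha] at hga
    rw [hb] at hgb
    linarith
  have hfac : (monX a - monX b : MvPolynomial (Fin (2 * l)) K) =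
      monX (a ⊓ b) * (monX (a - b) - monX (revVec (a - b))) := by
    rw [hrev, mul_sub, ← monX_add, ← monX_add, ha, hb]
  rw [hfac]
  exact Ideal.mul_mem_left _ _ (Ideal.subset_span ⟨a - b, hz, rfl⟩)

theorem sibirsky_eq_span_binomials : sibirsky K p q =
    Ideal.span {f | ∃ a b : Fin (2 * l) →₀ ℕ, psi0Exp p q a = psi0Exp p q b ∧
      f = monomial a 1 - monomial b 1} := by
  refine le_antisymm (Ideal.span_le.2 ?_) (Ideal.span_le.2 ?_)
  · rintro _ ⟨v, hv, rfl⟩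
    refine Ideal.subset_span ⟨_, _, (psi0Exp_eq_iff p q).2 ⟨?_, (tExp_revVec v).symm⟩,
      by rw [monX_eq_monomial, monX_eq_monomial]⟩
    rw [zdot_zeta] at hv
    simp only [Finsupp.coe_equivFunOnFinite_symm]
    linarith
  · rintro _ ⟨a, b, hab, rfl⟩
    obtain ⟨hg, ht⟩ := (psi0Exp_eq_iff p q).1 hab
    rw [← monX_coe, ← monX_coe]
    exact monX_sub_monX_mem_sibirsky K p q ht hg

end Sibirsky

section Psi0

variable {K : Type*} [Field K] {l : ℕ} (p : Fin l → ℤ) (q : Fin l → ℕ)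

local notation "ι" => algebraMap (MvPolynomial (Fin (l + 1)) K)
  (FractionRing (MvPolynomial (Fin (l + 1)) K))

theorem psi0_X_aIdx (k : Fin l) : psi0 p q (X (aIdx l k)) = ι (X k.succ) := by
  rw [psi0, aeval_X]
  exact dif_pos k.isLt

theorem psi0_X_bIdx (k : Fin l) :
    psi0 p q (X (bIdx l k)) = ι (X 0) ^ (p k - q k) * ι (X k.succ) := by
  have hk : 2 * l - 1 - (bIdx l k : ℕ) = k := by simp only [bIdx]; omega
  rw [psi0, aeval_X, dif_neg (by simp only [bIdx]; omega)]
  simp only [hk]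

theorem psi0_monX (v : Fin (2 * l) → ℕ) :
    psi0 p q (monX v : MvPolynomial (Fin (2 * l)) K) = laurentMonomial (psi0Exp p q v) := by
  have hγ : ι (X 0) ≠ 0 := algebraMap_X_ne_zero 0
  rw [monX, map_prod, prod_eq_prod_aIdx_mul_prod_bIdx, laurentMonomial, Fin.prod_univ_succ]
  simp only [map_pow, psi0_X_aIdx, psi0_X_bIdx, psi0Exp, Fin.cons_zero, Fin.cons_succ, tExp,
    gammaExp, zpow_natCast, pow_add, mul_pow, Finset.prod_mul_distrib]
  simp only [zpow_sum₀ hγ, zpow_mul, zpow_natCast]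
  ring

end Psi0

theorem stmt5_general {K : Type*} [Field K] {l : ℕ} (p : Fin l → ℤ) (q : Fin l → ℕ) :
    sibirsky K p q = RingHom.ker (psi0 (K := K) p q).toRingHom := by
  have hψ : ∀ d, psi0 (K := K) p q (monomial d 1) = laurentMonomial (psi0Exp p q ⇑d) :=
    fun d => by rw [← monX_coe, psi0_monX]
  rw [sibirsky_eq_span_binomials, ← MvPolynomial.ker_eq_span_binomials (psi0 (K := K) p q)
    linearIndependent_laurentMonomial _ hψ]
  rfl

theorem stmt5 {K : Type*} [Field K] {l : ℕ} (hl : 0 < l) (p : Fin l → ℤ) (q : Fin l → ℕ)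
    (hp : ∀ k, -1 ≤ p k) (hpq : ∀ k, 0 ≤ p k + (q k : ℤ))
    (hdist : Function.Injective fun k => (p k, q k)) :
    sibirsky K p q = RingHom.ker (psi0 (K := K) p q).toRingHom :=
  stmt5_general p q
end
end

section
/- Let K be a field. The Sibirsky ideal I_S is a prime ideal of the polynomial ring K[a₁,…,a_ℓ,b_ℓ,…,b₁]. -/
open MvPolynomial

noncomputable section

/-! The map `v ↦ (ζ·v, v + v̂)` on exponent vectors is additive, so it induces a ring map from
`K[a, b]` to the monoid algebra of `ℤ × ℕ^{2ℓ}`, a domain; we show that `I_S` is its kernel.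
Since `ζ` changes sign under reversal, `[ν] - [ν̂]` lies in the kernel for `ν ∈ M`. Conversely, the
kernel of any map of monoid algebras induced by a monoid map is spanned by binomials `[u] - [v]`
with `u, v` in the same fibre, and for such `u, v` the vector `α = (u - v)⁺` lies in `M` and
`u = α + τ`, `v = α̂ + τ`, so `[u] - [v] = [τ]([α] - [α̂])`. -/

namespace AddMonoidAlgebra

variable {R M N : Type*} [Ring R] [AddMonoid M] [AddMonoid N]

theorem ker_mapDomainRingHom_le {f : M →+ N} {I : Ideal R[M]}
    (hI : ∀ a b, f a = f b → single a (1 : R) - single b 1 ∈ I) :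
    RingHom.ker (mapDomainRingHom R f) ≤ I := by
  intro x hx
  -- `g` picks a representative of each fibre of `f`; `x` and its push-forward along `g`
  -- differ by a combination of binomials, and that push-forward factors through `f x = 0`.
  set g : M → M := Function.invFun f ∘ f
  have hfg (a : M) : f (g a) = f a := Function.invFun_eq ⟨a, rfl⟩
  have hgx : mapDomain g x = 0 := by
    have hfx : mapDomain f x = 0 := hx
    have : mapDomain g x = mapDomain (Function.invFun f) (mapDomain f x) := by
      ext; simp [g, Finsupp.mapDomain_comp]
    rw [this, hfx, mapDomain_zero]
  have hx_eq : x = x.coeff.sum fun a r => single a r - single (g a) r := by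
    have : x - mapDomain g x = x.coeff.sum fun a r => single a r - single (g a) r := by
      conv_lhs => rw [← sum_coeff_single x]
      rw [mapDomain_sum, Finsupp.sum_sub]
      simp only [mapDomain_single]
    rwa [hgx, sub_zero] at this
  rw [hx_eq]
  refine Ideal.sum_mem _ fun a _ => ?_
  have hmem := I.mul_mem_left (single 0 (x.coeff a)) (hI a (g a) (hfg a).symm)
  rwa [mul_sub, single_mul_single, single_mul_single, zero_add, zero_add, mul_one] at hmem

end AddMonoidAlgebra

section ReversalIdeal

open AddMonoidAlgebra

variable {K : Type*} [CommRing K] {n : ℕ} {z : Fin n → ℤ}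

variable (K z) in
def reversalIdeal : Ideal (MvPolynomial (Fin n) K) :=
  Ideal.span {f | ∃ v : Fin n → ℕ, zdot z v = 0 ∧ f = monX v - monX (revVec v)}

theorem zdot_add (x y : Fin n → ℕ) :
    zdot z (fun i => x i + y i) = zdot z x + zdot z y := by
  simp only [zdot, Nat.cast_add, mul_add, Finset.sum_add_distrib]

theorem zdot_revVec (hz : ∀ i, z i.rev = -z i) (v : Fin n → ℕ) :
    zdot z (revVec v) = -zdot z v := by
  rw [zdot, zdot, ← Finset.sum_neg_distrib, ← Equiv.sum_comp Fin.revPerm]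
  simp [revVec, hz]

theorem monX_add_s6 (x y : Fin n → ℕ) :
    (monX (fun i => x i + y i) : MvPolynomial (Fin n) K) = monX x * monX y := by
  simp only [monX, pow_add, Finset.prod_mul_distrib]

theorem monX_eq_single (v : Fin n → ℕ) :
    (monX v : MvPolynomial (Fin n) K) = single (Finsupp.equivFunOnFinite.symm v) 1 := by
  rw [MvPolynomial.single_eq_monomial, MvPolynomial.monomial_eq, MvPolynomial.C_1, one_mul,
    Finsupp.prod_fintype _ _ fun i => pow_zero _, monX]
  simp only [Finsupp.coe_equivFunOnFinite_symm]

variable (z) in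
def reversalGrading : (Fin n →₀ ℕ) →+ ℤ × (Fin n → ℕ) where
  toFun d := (zdot z d, fun i => d i + d i.rev)
  map_zero' := by ext <;> simp [zdot]
  map_add' d e := by
    ext i
    · exact zdot_add d e
    · simp only [Finsupp.coe_add, Pi.add_apply, Prod.snd_add]
      ring

theorem reversalGrading_apply (d : Fin n →₀ ℕ) :
    reversalGrading z d = (zdot z d, fun i => d i + d i.rev) :=
  rfl

theorem reversalIdeal_le_ker (hz : ∀ i, z i.rev = -z i) :
    reversalIdeal K z ≤ RingHom.ker (mapDomainRingHom K (reversalGrading z)) := by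
  rw [reversalIdeal, Ideal.span_le]
  rintro _ ⟨v, hv, rfl⟩
  have hgrading : reversalGrading z (Finsupp.equivFunOnFinite.symm v)
      = reversalGrading z (Finsupp.equivFunOnFinite.symm (revVec v)) := by
    simp only [reversalGrading_apply, Finsupp.coe_equivFunOnFinite_symm, zdot_revVec hz, hv,
      neg_zero, revVec, Fin.rev_rev, add_comm]
  rw [SetLike.mem_coe, RingHom.mem_ker, map_sub, monX_eq_single, monX_eq_single,
    mapDomainRingHom_apply, mapDomainRingHom_apply, mapDomain_single, mapDomain_single,
    hgrading, sub_self]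

theorem monX_sub_monX_mem (hz : ∀ i, z i.rev = -z i) {u v : Fin n → ℕ}
    (hsym : ∀ i, u i + u i.rev = v i + v i.rev) (hzuv : zdot z u = zdot z v) :
    (monX u - monX v : MvPolynomial (Fin n) K) ∈ reversalIdeal K z := by
  set α : Fin n → ℕ := fun i => ((u i : ℤ) - v i).toNat
  set τ : Fin n → ℕ := fun i => u i - α i
  have hu : u = fun i => α i + τ i := by
    funext i; simp only [α, τ]; omega
  have hv : v = fun i => revVec α i + τ i := by
    funext i; have := hsym i; simp only [revVec, α, τ]; omega
  have hα : zdot z α = 0 := by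
    rw [hu, hv, zdot_add, zdot_add, add_left_inj, zdot_revVec hz] at hzuv
    omega
  rw [hu, hv, monX_add_s6, monX_add_s6, ← sub_mul, mul_comm]
  exact Ideal.mul_mem_left _ _ (Ideal.subset_span ⟨α, hα, rfl⟩)

theorem reversalIdeal_eq_ker (hz : ∀ i, z i.rev = -z i) :
    reversalIdeal K z = RingHom.ker (mapDomainRingHom K (reversalGrading z)) := by
  refine le_antisymm (reversalIdeal_le_ker hz) (ker_mapDomainRingHom_le fun a b hab => ?_)
  rw [reversalGrading_apply, reversalGrading_apply, Prod.mk.injEq, funext_iff] at hab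
  have hmem := monX_sub_monX_mem (K := K) hz hab.2 hab.1
  rwa [monX_eq_single, monX_eq_single, Finsupp.equivFunOnFinite_symm_coe,
    Finsupp.equivFunOnFinite_symm_coe] at hmem

theorem reversalIdeal_isPrime [IsDomain K] (hz : ∀ i, z i.rev = -z i) :
    (reversalIdeal K z).IsPrime := by
  rw [reversalIdeal_eq_ker hz]
  exact RingHom.ker_isPrime _

end ReversalIdeal

theorem sibirsky_eq_reversalIdeal {K : Type*} [CommRing K] {l : ℕ} (p : Fin l → ℤ)
    (q : Fin l → ℕ) :
    sibirsky K p q = reversalIdeal K (zeta p q) :=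
  rfl

theorem zeta_rev {l : ℕ} (p : Fin l → ℤ) (q : Fin l → ℕ) (i : Fin (2 * l)) :
    zeta p q i.rev = -zeta p q i := by
  have hi := i.isLt
  unfold zeta
  by_cases h : (i : ℕ) < l
  · have h' : ¬ (i.rev : ℕ) < l := by rw [Fin.val_rev]; omega
    have hidx : (⟨2 * l - 1 - (i.rev : ℕ), by omega⟩ : Fin l) = ⟨i, h⟩ := by
      ext; simp only [Fin.val_rev]; omega
    rw [dif_neg h', dif_pos h, hidx]
    ring
  · have h' : (i.rev : ℕ) < l := by rw [Fin.val_rev]; omega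
    have hidx : (⟨i.rev, h'⟩ : Fin l) = ⟨2 * l - 1 - i, by omega⟩ := by
      ext; simp only [Fin.val_rev]; omega
    rw [dif_pos h', dif_neg h, hidx]
    ring

theorem stmt6_general {K : Type*} [Field K] {l : ℕ} (p : Fin l → ℤ) (q : Fin l → ℕ) :
    (sibirsky K p q).IsPrime := by
  rw [sibirsky_eq_reversalIdeal]
  exact reversalIdeal_isPrime (zeta_rev p q)

theorem stmt6 {K : Type*} [Field K] {l : ℕ} (hl : 0 < l) (p : Fin l → ℤ) (q : Fin l → ℕ)
    (hp : ∀ k, -1 ≤ p k) (hpq : ∀ k, 0 ≤ p k + (q k : ℤ))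
    (hdist : Function.Injective fun k => (p k, q k)) :
    (sibirsky K p q).IsPrime :=
  stmt6_general p q
end
end
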